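/- Let W′ be a parabolic subgroup of a finite Coxeter group W with set of canonical generators S′, and let s ∈ S be a simple generator. If s ∉ S′, then the parabolic subgroup sW′s has set of canonical generators sS′s = {ss′s : s′ ∈ S′}. -/

import Mathlib

open CoxeterSystem

variable {B : Type*} [DecidableEq B] {W : Type*} [Group W] {M : CoxeterMatrix B}

/-- The standard parabolic subgroup `W_J` generated by the simple generators in `J`. -/
def CoxeterSystem.StandardParabolic (cs : CoxeterSystem M W) (J : Set B) : Subgroup W :=
  Subgroup.closure (cs.simple '' J)

/-- A parabolic subgroup: a conjugate of a standard parabolic subgroup. -/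
def CoxeterSystem.IsParabolic (cs : CoxeterSystem M W) (W' : Subgroup W) : Prop :=
  ∃ (w : W) (J : Set B), W' = (cs.StandardParabolic J).map (MulAut.conj w).toMonoidHom

/-- The set of inversions of `w`: reflections `t` with `ℓ(tw) < ℓ(w)`. -/
def CoxeterSystem.Inversions (cs : CoxeterSystem M W) (w : W) : Set W :=
  {t | cs.IsReflection t ∧ cs.length (t * w) < cs.length w}

/-- `t` is a canonical generator of `W'`: a reflection in `W'` with `I(t) ∩ W' = {t}`. -/
def CoxeterSystem.IsCanonicalGenerator (cs : CoxeterSystem M W) (W' : Subgroup W) (t : W) :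
    Prop :=
  cs.IsReflection t ∧ t ∈ W' ∧ cs.Inversions t ∩ (W' : Set W) = {t}

/-- A cover reflection of `w`: a reflection `t` with `t * w = w * s` for a descent `s` of `w`. -/
def CoxeterSystem.IsCoverReflection (cs : CoxeterSystem M W) (w t : W) : Prop :=
  cs.IsReflection t ∧ ∃ i : B, cs.IsRightDescent w i ∧ t * w = w * cs.simple i

/-- A Coxeter element: the product of the simple generators, each occurring once. -/
def CoxeterSystem.IsCoxeterElement (cs : CoxeterSystem M W) (c : W) : Prop :=
  ∃ l : List B, l.Nodup ∧ (∀ i : B, i ∈ l) ∧ cs.wordProd l = c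

/-- `s i` is initial in `c`, i.e. `ℓ(sc) < ℓ(c)`. -/
def CoxeterSystem.IsInitial (cs : CoxeterSystem M W) (i : B) (c : W) : Prop :=
  cs.length (cs.simple i * c) < cs.length c

/-- `s i` is final in `c`, i.e. `ℓ(cs) < ℓ(c)`. -/
def CoxeterSystem.IsFinal (cs : CoxeterSystem M W) (i : B) (c : W) : Prop :=
  cs.length (c * cs.simple i) < cs.length c

/-- `w` is sortable with respect to the Coxeter element `c` of the standard parabolic
subsystem on `J`: for some (equivalently, every) reduced word `l` for `c` using each letter
of `J` exactly once, there is a nested chain `K₁ ⊇ K₂ ⊇ ⋯` of subsets such that the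
concatenation `c_{K₁} c_{K₂} ⋯` is a reduced word for `w`. -/
def CoxeterSystem.IsSortableIn (cs : CoxeterSystem M W) (J : Set B) (c w : W) : Prop :=
  ∃ l : List B, l.Nodup ∧ (∀ i : B, i ∈ l ↔ i ∈ J) ∧ cs.wordProd l = c ∧
    ∃ K : List (Finset B), List.Chain' (fun A A' => A' ⊆ A) K ∧
      cs.IsReduced ((K.map (fun Ki => l.filter (fun i => i ∈ Ki))).flatten) ∧
      cs.wordProd ((K.map (fun Ki => l.filter (fun i => i ∈ Ki))).flatten) = w

/-- `w` is `c`-sortable. -/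
def CoxeterSystem.IsSortable (cs : CoxeterSystem M W) (c w : W) : Prop :=
  cs.IsSortableIn Set.univ c w

/-- The absolute length of `x`: the minimal length of a word in the reflections whose
product is `x`. -/
noncomputable def CoxeterSystem.absLength (cs : CoxeterSystem M W) (x : W) : ℕ :=
  sInf {k | ∃ l : List W, (∀ t ∈ l, cs.IsReflection t) ∧ l.length = k ∧ l.prod = x}

/-- The absolute order: `x ≤_T y` iff `ℓ_T(x) + ℓ_T(x⁻¹y) = ℓ_T(y)`. -/
def CoxeterSystem.absLeT (cs : CoxeterSystem M W) (x y : W) : Prop :=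
  cs.absLength x + cs.absLength (x⁻¹ * y) = cs.absLength y
namespace CoxAux

open List
set_option linter.unusedSectionVars false

variable {B : Type*} [DecidableEq B] {W : Type*} [Group W] {M : CoxeterMatrix B}
variable (cs : CoxeterSystem M W)

local prefix:100 "s" => cs.simple
local prefix:100 "π" => cs.wordProd
local prefix:100 "ℓ" => cs.length

/-- `if p then 1 else 0` in `ZMod 2`, classically. -/
noncomputable def ind (p : Prop) : ZMod 2 := by classical exact if p then 1 else 0

lemma ind_pos {p : Prop} (h : p) : ind p = 1 := by simp [ind, h]

lemma ind_neg {p : Prop} (h : ¬ p) : ind p = 0 := by simp [ind, h]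

lemma ind_congr {p q : Prop} (h : p ↔ q) : ind p = ind q := by
  by_cases hp : p
  · rw [ind_pos hp, ind_pos (h.mp hp)]
  · rw [ind_neg hp, ind_neg (fun hq => hp (h.mpr hq))]

lemma zmod2_add_self (a : ZMod 2) : a + a = 0 := by revert a; decide

/-- Count (mod 2) of `t` in a list. -/
noncomputable def cnt (t : W) (l : List W) : ZMod 2 := (l.map (fun x => ind (x = t))).sum

@[simp] lemma cnt_nil (t : W) : cnt t ([] : List W) = 0 := rfl

lemma cnt_cons (t x : W) (l : List W) : cnt t (x :: l) = ind (x = t) + cnt t l := by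
  simp [cnt]

lemma cnt_append (t : W) (l l' : List W) : cnt t (l ++ l') = cnt t l + cnt t l' := by
  simp [cnt]

lemma cnt_concat (t x : W) (l : List W) : cnt t (l.concat x) = cnt t l + ind (x = t) := by
  simp [cnt]

lemma cnt_reverse (t : W) (l : List W) : cnt t l.reverse = cnt t l := by
  simp only [cnt, List.map_reverse, List.sum_reverse]

lemma cnt_self_eq_zero_of_not_mem {t : W} {l : List W} (h : t ∉ l) : cnt t l = 0 := by
  apply List.sum_eq_zero
  intro x hx
  simp only [List.mem_map] at hx
  obtain ⟨y, hy, rfl⟩ := hx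
  exact ind_neg (fun hyt => h (hyt ▸ hy))

lemma cnt_map_conj (g t : W) (l : List W) :
    cnt t (l.map (fun x => g * x * g⁻¹)) = cnt (g⁻¹ * t * g) l := by
  simp only [cnt, List.map_map]
  congr 1
  apply List.map_congr_left
  intro x _
  apply ind_congr
  constructor
  · rintro rfl; group
  · intro h; rw [h]; group


lemma leftInvSeq_cons (i : B) (ω : List B) :
    cs.leftInvSeq (i :: ω) = s i :: (cs.leftInvSeq ω).map (fun x => s i * x * (s i)⁻¹) := by
  dsimp [leftInvSeq]
  congr 1

lemma leftInvSeq_append' (ω₁ ω₂ : List B) :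
    cs.leftInvSeq (ω₁ ++ ω₂) =
      cs.leftInvSeq ω₁ ++ (cs.leftInvSeq ω₂).map (fun x => π ω₁ * x * (π ω₁)⁻¹) := by
  induction ω₁ with
  | nil => simp
  | cons i ω₁ ih =>
      rw [List.cons_append, leftInvSeq_cons, leftInvSeq_cons, ih, List.map_append,
        List.map_map, List.cons_append]
      have hc : ((fun x => s i * x * (s i)⁻¹) ∘ fun x => π ω₁ * x * (π ω₁)⁻¹)
          = fun x => π (i :: ω₁) * x * (π (i :: ω₁))⁻¹ := by
        funext x
        simp only [Function.comp_apply, wordProd_cons]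
        group
      rw [hc]

lemma rightInvSeq_eq_map (ω : List B) :
    cs.rightInvSeq ω = (cs.leftInvSeq ω).map (fun x => (π ω)⁻¹ * x * (π ω)) := by
  induction ω with
  | nil => simp
  | cons i ω ih =>
      dsimp only [rightInvSeq]
      rw [ih, leftInvSeq_cons, List.map_cons, List.map_map]
      have hc : ((fun x => (π (i :: ω))⁻¹ * x * π (i :: ω)) ∘ fun x => s i * x * (s i)⁻¹)
          = fun x => (π ω)⁻¹ * x * π ω := by
        funext x
        simp only [Function.comp_apply, wordProd_cons]
        group
      rw [hc]
      congr 1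
      simp only [wordProd_cons]
      group

/-- The word `[i, i', i, i', ...]` with `r` pairs. -/
def pairWord (i i' : B) : ℕ → List B
  | 0 => []
  | r + 1 => i :: i' :: pairWord i i' r

lemma wordProd_pairWord (i i' : B) (r : ℕ) :
    π (pairWord i i' r) = (s i * s i') ^ r := by
  induction r with
  | zero => simp [pairWord]
  | succ r ih =>
      rw [pairWord, wordProd_cons, wordProd_cons, ih, pow_succ']
      group

lemma pairWord_append_pair (i i' : B) (r : ℕ) :
    pairWord i i' r ++ [i, i'] = pairWord i i' (r + 1) := by
  induction r with
  | zero => simp [pairWord]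
  | succ r ih =>
      show i :: i' :: (pairWord i i' r ++ [i, i']) = _
      rw [ih]
      rfl

lemma reverse_pairWord (i i' : B) (r : ℕ) :
    (pairWord i i' r).reverse = pairWord i' i r := by
  induction r with
  | zero => simp [pairWord]
  | succ r ih =>
      show (i :: i' :: pairWord i i' r).reverse = _
      rw [List.reverse_cons, List.reverse_cons, ih, List.append_assoc]
      show pairWord i' i r ++ [i', i] = _
      rw [pairWord_append_pair]

lemma conj_pow_simple (i i' : B) (j : ℕ) :
    (s i * s i') * ((s i * s i') ^ j * s i) * (s i * s i')⁻¹ =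
      (s i * s i') ^ (j + 2) * s i := by
  have h1 : s i * (s i * s i')⁻¹ = (s i * s i') * s i := by
    rw [mul_inv_rev, inv_simple, inv_simple, mul_assoc]
  have h2 : Commute ((s i * s i')) ((s i * s i') ^ j) := (Commute.refl _).pow_right j
  calc (s i * s i') * ((s i * s i') ^ j * s i) * (s i * s i')⁻¹
      = (s i * s i') * (s i * s i') ^ j * (s i * (s i * s i')⁻¹) := by group
    _ = (s i * s i') ^ j * (s i * s i') * ((s i * s i') * s i) := by rw [h1, h2.eq]
    _ = (s i * s i') ^ (j + 2) * s i := by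
        rw [show j + 2 = j + 1 + 1 from rfl, pow_succ, pow_succ]
        group

lemma lis_pairWord (i i' : B) (r : ℕ) :
    cs.leftInvSeq (pairWord i i' r) =
      (List.range (2 * r)).map (fun j => (s i * s i') ^ j * s i) := by
  induction r with
  | zero => simp [pairWord]
  | succ r ih =>
      rw [pairWord, leftInvSeq_cons cs, leftInvSeq_cons cs, ih]
      simp only [List.map_cons, List.map_map]
      rw [show 2 * (r + 1) = (2 * r + 1) + 1 by omega, List.range_succ_eq_map,
        List.range_succ_eq_map]
      simp only [List.map_cons, List.map_map]
      congr 1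
      · simp
      congr 1
      · simp [mul_assoc]
      · apply List.map_congr_left
        intro j _
        show s i * (s i' * ((s i * s i') ^ j * s i) * (s i')⁻¹) * (s i)⁻¹ =
          (s i * s i') ^ Nat.succ (Nat.succ j) * s i
        have h := conj_pow_simple cs i i' j
        rw [show Nat.succ (Nat.succ j) = j + 2 from rfl, ← h, mul_inv_rev]
        group


lemma cnt_lis_pairWord (i i' : B) {m : ℕ} (hm : (s i * s i') ^ m = 1) (t : W) :
    cnt t (cs.leftInvSeq (pairWord i i' m)) = 0 := by
  rw [lis_pairWord, two_mul, List.range_add, List.map_append, cnt_append, List.map_map]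
  have hc : ((fun j => (s i * s i') ^ j * s i) ∘ fun j => m + j)
      = fun j => (s i * s i') ^ j * s i := by
    funext j
    simp only [Function.comp_apply, pow_add, hm, one_mul]
  rw [hc, zmod2_add_self]

/-- The Tits sign permutation associated to a simple generator. -/
noncomputable def sgnPerm (i : B) : Equiv.Perm (W × ZMod 2) :=
  Function.Involutive.toPerm
    (fun x => (s i * x.1 * s i, x.2 + ind (x.1 = s i)))
    (by
      rintro ⟨t, ε⟩
      simp only [Prod.mk.injEq]
      constructor
      · calc s i * (s i * t * s i) * s i = (s i * s i) * t * (s i * s i) := by group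
          _ = t := by rw [cs.simple_mul_simple_self]; group
      · have h : (s i * t * s i = s i) ↔ (t = s i) := by
          constructor
          · intro h
            have := congrArg (fun z => s i * z * s i) h
            calc t = (s i * s i) * t * (s i * s i) := by rw [cs.simple_mul_simple_self]; group
              _ = s i * (s i * t * s i) * s i := by group
              _ = s i * s i * s i := by rw [h]
              _ = s i := by rw [cs.simple_mul_simple_self]; group
          · rintro rfl
            rw [cs.simple_mul_simple_self, one_mul]
        rw [ind_congr h, add_assoc, zmod2_add_self, add_zero])

lemma sgnPerm_apply (i : B) (t : W) (ε : ZMod 2) :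
    sgnPerm cs i (t, ε) = (s i * t * s i, ε + ind (t = s i)) := rfl

/-- Product of sign permutations along a word. -/
noncomputable def F (ω : List B) : Equiv.Perm (W × ZMod 2) := (ω.map (sgnPerm cs)).prod

@[simp] lemma F_nil : F cs ([] : List B) = 1 := rfl

lemma F_cons (i : B) (ω : List B) : F cs (i :: ω) = sgnPerm cs i * F cs ω := by
  simp [F]

lemma F_apply (ω : List B) (t : W) (ε : ZMod 2) :
    F cs ω (t, ε) = (π ω * t * (π ω)⁻¹, ε + cnt t (cs.leftInvSeq ω.reverse)) := by
  induction ω generalizing t ε with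
  | nil => simp
  | cons i ω ih =>
      rw [F_cons, Equiv.Perm.mul_apply, ih, sgnPerm_apply]
      rw [List.reverse_cons, ← List.concat_eq_append, leftInvSeq_concat, cnt_concat]
      congr 1
      · simp only [wordProd_cons, mul_inv_rev, inv_simple]
        group
      · rw [wordProd_reverse]
        have h : (π ω * t * (π ω)⁻¹ = s i) ↔ ((π ω)⁻¹ * s i * (π ω)⁻¹⁻¹ = t) := by
          constructor
          · intro h
            rw [← h]
            group
          · intro h
            rw [← h]
            group
        rw [ind_congr h, add_assoc]

lemma F_pairWord (i i' : B) (r : ℕ) :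
    F cs (pairWord i i' r) = (sgnPerm cs i * sgnPerm cs i') ^ r := by
  induction r with
  | zero => simp [pairWord]
  | succ r ih =>
      show F cs (i :: i' :: pairWord i i' r) = _
      rw [F_cons, F_cons, ih, pow_succ']
      group

lemma isLiftable_sgnPerm : M.IsLiftable (sgnPerm cs) := by
  intro i i'
  rw [← F_pairWord]
  apply Equiv.ext
  rintro ⟨t, ε⟩
  rw [F_apply]
  rw [reverse_pairWord, wordProd_pairWord, cs.simple_mul_simple_pow i i',
    cnt_lis_pairWord cs i' i (cs.simple_mul_simple_pow' i i')]
  simp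

/-- The lifted homomorphism `W →* Perm (W × ZMod 2)`. -/
noncomputable def phi : W →* Equiv.Perm (W × ZMod 2) :=
  cs.lift ⟨sgnPerm cs, (isLiftable_sgnPerm cs)⟩

lemma phi_simple (i : B) : phi cs (s i) = sgnPerm cs i :=
  cs.lift_apply_simple (isLiftable_sgnPerm cs) i

lemma phi_wordProd (ω : List B) : phi cs (π ω) = F cs ω := by
  induction ω with
  | nil => simp [phi]
  | cons i ω ih => rw [wordProd_cons, map_mul, ih, phi_simple, F_cons]

/-- The parity invariant: `μ w t` is the parity of the number of occurrences of `t`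
in the left inversion sequence of any word for `w`. -/
noncomputable def mu (w t : W) : ZMod 2 := (phi cs w⁻¹ (t, 0)).2

lemma mu_wordProd (ω : List B) (t : W) : mu cs (π ω) t = cnt t (cs.leftInvSeq ω) := by
  rw [mu, ← wordProd_reverse, phi_wordProd, F_apply, List.reverse_reverse]
  simp


lemma zmod2_cases (a : ZMod 2) : a = 0 ∨ a = 1 := by revert a; decide

lemma isLeftInversion_of_mu_eq_one {w t : W} (h : mu cs w t = 1) :
    cs.IsLeftInversion w t := by
  obtain ⟨ω, hred, rfl⟩ := cs.exists_reduced_word' w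
  rw [mu_wordProd] at h
  have hmem : t ∈ cs.leftInvSeq ω := by
    by_contra hn
    rw [cnt_self_eq_zero_of_not_mem hn] at h
    exact absurd h.symm (by decide)
  exact cs.isLeftInversion_of_mem_leftInvSeq hred hmem

lemma mu_eq_cnt {w t : W} {ω : List B} (hw : w = π ω) :
    mu cs w t = cnt t (cs.leftInvSeq ω) := by
  rw [hw, mu_wordProd]

lemma mu_self_eq_one {t : W} (ht : cs.IsReflection t) : mu cs t t = 1 := by
  obtain ⟨u, i, rfl⟩ := ht
  obtain ⟨ρ, rfl⟩ := cs.wordProd_surjective u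
  set u := π ρ with hu
  have hω : u * s i * u⁻¹ = π (ρ.concat i ++ ρ.reverse) := by
    rw [wordProd_append, wordProd_concat, wordProd_reverse]
  rw [mu_eq_cnt cs hω]
  rw [leftInvSeq_append' cs (ρ.concat i) ρ.reverse, cnt_append]
  rw [leftInvSeq_concat, cnt_concat]
  rw [cs.leftInvSeq_reverse, rightInvSeq_eq_map, List.map_reverse, List.map_map,
    cnt_reverse]
  rw [ind_pos rfl]
  have hc : ((fun x => π (ρ.concat i) * x * (π (ρ.concat i))⁻¹) ∘ fun x => (π ρ)⁻¹ * x * π ρ)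
      = fun x => (u * s i * u⁻¹) * x * (u * s i * u⁻¹)⁻¹ := by
    funext x
    simp only [Function.comp_apply, wordProd_concat, ← hu, mul_inv_rev, inv_simple]
    group
  rw [hc, cnt_map_conj]
  have harg : (u * s i * u⁻¹)⁻¹ * (u * s i * u⁻¹) * (u * s i * u⁻¹) = u * s i * u⁻¹ := by
    group
  rw [harg]
  rw [add_comm (cnt (u * s i * u⁻¹) (cs.leftInvSeq ρ)) 1, add_assoc, zmod2_add_self, add_zero]

lemma mu_mul_self_left (t v : W) (ht : cs.IsReflection t) :
    mu cs (t * v) t = 1 + mu cs v t := by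
  obtain ⟨ωt, -, hωt⟩ := cs.exists_reduced_word' t
  obtain ⟨ωv, -, hωv⟩ := cs.exists_reduced_word' v
  have h : t * v = π (ωt ++ ωv) := by rw [wordProd_append, ← hωt, ← hωv]
  rw [h, mu_wordProd, leftInvSeq_append', cnt_append, ← hωt, cnt_map_conj]
  have harg : t⁻¹ * t * t = t := by group
  rw [harg, ← mu_wordProd, ← hωt, ← mu_wordProd, ← hωv, mu_self_eq_one cs ht]

lemma isLeftInversion_iff_mu {w t : W} (ht : cs.IsReflection t) :
    cs.IsLeftInversion w t ↔ mu cs w t = 1 := by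
  constructor
  · intro hinv
    rcases zmod2_cases (mu cs w t) with h0 | h1
    · exfalso
      have hw : t * (t * w) = w := by
        rw [← mul_assoc, ht.mul_self, one_mul]
      have h := mu_mul_self_left cs t (t * w) ht
      rw [hw, h0] at h
      have h1 : mu cs (t * w) t = 1 := by
        rcases zmod2_cases (mu cs (t * w) t) with h' | h'
        · rw [h'] at h; exact absurd h (by decide)
        · exact h'
      have hlen := (isLeftInversion_of_mu_eq_one cs h1).2
      rw [hw] at hlen
      have := hinv.2
      omega
    · exact h1
  · exact isLeftInversion_of_mu_eq_one cs

lemma mu_simple_mul {w x : W} (i : B) (hxs : x ≠ s i) :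
    mu cs (s i * w) x = mu cs w (s i * x * s i) := by
  obtain ⟨ω, -, hω⟩ := cs.exists_reduced_word' w
  have h : s i * w = π (i :: ω) := by rw [wordProd_cons, hω]
  rw [h, mu_wordProd, leftInvSeq_cons, cnt_cons, cnt_map_conj, ind_neg (by
    intro h'; exact hxs h'.symm), zero_add, inv_simple, hω, mu_wordProd]

lemma lemL {w x : W} (i : B) (hx : cs.IsReflection x) (hxs : x ≠ s i) :
    cs.IsLeftInversion (s i * w) x ↔ cs.IsLeftInversion w (s i * x * s i) := by
  have hx' : cs.IsReflection (s i * x * s i) := by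
    have := hx.conj (s i)
    rwa [inv_simple] at this
  rw [isLeftInversion_iff_mu cs hx, isLeftInversion_iff_mu cs hx', mu_simple_mul cs i hxs]

lemma lemR {w y : W} (i : B) (hy : cs.IsReflection y) (hne : y ≠ w * s i * w⁻¹) :
    cs.IsLeftInversion (w * s i) y ↔ cs.IsLeftInversion w y := by
  obtain ⟨ω, -, hω⟩ := cs.exists_reduced_word' w
  rw [isLeftInversion_iff_mu cs hy, isLeftInversion_iff_mu cs hy]
  have h : w * s i = π (ω.concat i) := by rw [wordProd_concat, hω]
  rw [h, mu_wordProd, leftInvSeq_concat, cnt_concat, hω, mu_wordProd, ← hω,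
    ind_neg (by intro h'; exact hne h'.symm), add_zero]


lemma reflection_ne_one {t : W} (ht : cs.IsReflection t) : t ≠ 1 := by
  intro h
  have := ht.odd_length
  rw [h, cs.length_one] at this
  exact (Nat.not_odd_iff_even.mpr (Even.zero)) this

lemma self_mem_inversions {t : W} (ht : cs.IsReflection t) : t ∈ cs.Inversions t := by
  refine ⟨ht, ?_⟩
  rw [ht.mul_self, cs.length_one]
  have h0 : ℓ t ≠ 0 := fun h => reflection_ne_one cs ht (cs.length_eq_zero_iff.mp h)
  omega

lemma inversions_simple_eq (i : B) : cs.Inversions (s i) = {s i} := by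
  ext t
  constructor
  · rintro ⟨htr, hlen⟩
    rw [cs.length_simple] at hlen
    have h0 : ℓ (t * s i) = 0 := by omega
    have h1 : t * s i = 1 := cs.length_eq_zero_iff.mp h0
    have h2 : t = (s i)⁻¹ := (mul_eq_one_iff_eq_inv).mp h1
    rw [inv_simple] at h2
    simp [h2]
  · rintro rfl
    exact self_mem_inversions cs (cs.isReflection_simple i)

lemma canonical_simple_iff (i : B) (V : Subgroup W) :
    cs.IsCanonicalGenerator V (s i) ↔ s i ∈ V := by
  constructor
  · exact fun h => h.2.1
  · intro h
    refine ⟨cs.isReflection_simple i, h, ?_⟩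
    rw [inversions_simple_eq]
    exact Set.inter_eq_self_of_subset_left (by simpa using h)

lemma conj_canonical (i : B) (V : Subgroup W) (hsv : s i ∉ V) {t : W}
    (ht : cs.IsCanonicalGenerator V t) :
    cs.IsCanonicalGenerator (V.map (MulAut.conj (s i)).toMonoidHom) (s i * t * s i) := by
  obtain ⟨htr, htm, hti⟩ := ht
  have hrefl : cs.IsReflection (s i * t * s i) := by
    have := htr.conj (s i)
    rwa [inv_simple] at this
  refine ⟨hrefl, ?_, ?_⟩
  · refine Subgroup.mem_map.mpr ⟨t, htm, ?_⟩
    simp only [MulEquiv.coe_toMonoidHom, MulAut.conj_apply, inv_simple]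
  · apply Set.eq_singleton_iff_unique_mem.mpr
    constructor
    · refine ⟨self_mem_inversions cs hrefl, ?_⟩
      exact Subgroup.mem_map.mpr ⟨t, htm, by
        simp only [MulEquiv.coe_toMonoidHom, MulAut.conj_apply, inv_simple]⟩
    · rintro x ⟨⟨hxr, hxlen⟩, hxV⟩
      obtain ⟨y, hyV, rfl⟩ := Subgroup.mem_map.mp hxV
      simp only [MulEquiv.coe_toMonoidHom, MulAut.conj_apply, inv_simple] at *
      -- now x = s i * y * s i
      have hyr : cs.IsReflection y := by
        have h' := hxr
        rw [show s i * y * s i = s i * y * (s i)⁻¹ by rw [inv_simple]] at h'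
        exact (isReflection_conj_iff cs (s i) y).mp h'
      have hxs : s i * y * s i ≠ s i := by
        intro h
        apply hsv
        have : y = s i := by
          calc y = (s i * s i) * y * (s i * s i) := by rw [cs.simple_mul_simple_self]; group
            _ = s i * (s i * y * s i) * s i := by group
            _ = s i * s i * s i := by rw [h]
            _ = s i := by rw [cs.simple_mul_simple_self, one_mul]
        rwa [this] at hyV
      have hinv1 : cs.IsLeftInversion (s i * (t * s i)) (s i * y * s i) := by
        refine ⟨hxr, ?_⟩
        convert hxlen using 2
        group
      have hinv2 : cs.IsLeftInversion (t * s i) (s i * (s i * y * s i) * s i) :=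
        (lemL cs i hxr hxs).mp hinv1
      have hyy : s i * (s i * y * s i) * s i = y := by
        calc s i * (s i * y * s i) * s i = (s i * s i) * y * (s i * s i) := by group
          _ = y := by rw [cs.simple_mul_simple_self]; group
      rw [hyy] at hinv2
      have hyne : y ≠ t * s i * t⁻¹ := by
        intro h
        apply hsv
        have : t⁻¹ * y * t = s i := by rw [h]; group
        rw [← this]
        exact Subgroup.mul_mem V (Subgroup.mul_mem V (Subgroup.inv_mem V htm) hyV) htm
      have hinv3 : cs.IsLeftInversion t y := (lemR cs i hyr hyne).mp hinv2
      have hyt : y = t := by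
        have : y ∈ cs.Inversions t ∩ (V : Set W) := ⟨⟨hinv3.1, hinv3.2⟩, hyV⟩
        rw [hti] at this
        exact this
      rw [hyt]

end CoxAux

/-- if the simple generator `s` is not a canonical generator of the parabolic
subgroup `W'`, then `sW's` has canonical generators `sS's`. -/
theorem canonicalGenerators_of_conj_parabolic
    (cs : CoxeterSystem M W) [Finite W] (W' : Subgroup W) (h : cs.IsParabolic W')
    (i : B) (hs : ¬ cs.IsCanonicalGenerator W' (cs.simple i)) :
    {t | cs.IsCanonicalGenerator (W'.map (MulAut.conj (cs.simple i)).toMonoidHom) t} =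
      (fun t => cs.simple i * t * cs.simple i) '' {t | cs.IsCanonicalGenerator W' t} := by
  have hsW' : cs.simple i ∉ W' := fun hmem => hs ((CoxAux.canonical_simple_iff cs i W').mpr hmem)
  ext u
  simp only [Set.mem_setOf_eq, Set.mem_image]
  constructor
  · intro hu
    refine ⟨cs.simple i * u * cs.simple i, ?_, ?_⟩
    · have hsV : cs.simple i ∉ W'.map (MulAut.conj (cs.simple i)).toMonoidHom := by
        intro hmem
        obtain ⟨y, hy, hy2⟩ := Subgroup.mem_map.mp hmem
        simp only [MulEquiv.coe_toMonoidHom, MulAut.conj_apply, inv_simple] at hy2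
        apply hsW'
        have hy3 : y = cs.simple i := by
          calc y = (cs.simple i * cs.simple i) * y * (cs.simple i * cs.simple i) := by
                rw [cs.simple_mul_simple_self]; group
            _ = cs.simple i * (cs.simple i * y * cs.simple i) * cs.simple i := by group
            _ = cs.simple i * cs.simple i * cs.simple i := by rw [hy2]
            _ = cs.simple i := by rw [cs.simple_mul_simple_self, one_mul]
        rwa [hy3] at hy
      have h2 := CoxAux.conj_canonical cs i _ hsV hu
      have hcomp : ((MulAut.conj (cs.simple i)).toMonoidHom :
            W →* W).comp (MulAut.conj (cs.simple i)).toMonoidHom = MonoidHom.id W := by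
        ext x
        simp only [MonoidHom.coe_comp, Function.comp_apply, MulEquiv.coe_toMonoidHom,
          MulAut.conj_apply, MonoidHom.id_apply, inv_simple]
        calc cs.simple i * (cs.simple i * x * cs.simple i) * cs.simple i
            = (cs.simple i * cs.simple i) * x * (cs.simple i * cs.simple i) := by group
          _ = x := by rw [cs.simple_mul_simple_self]; group
      rwa [Subgroup.map_map, hcomp, Subgroup.map_id] at h2
    · calc cs.simple i * (cs.simple i * u * cs.simple i) * cs.simple i
          = (cs.simple i * cs.simple i) * u * (cs.simple i * cs.simple i) := by group
        _ = u := by rw [cs.simple_mul_simple_self]; group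
  · rintro ⟨t, ht, rfl⟩
    exact CoxAux.conj_canonical cs i W' hsW' ht
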